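/- If g, h : A → X are homotopic maps and i : A → B is a cofibration, then the pushouts B ∪_g X and B ∪_h X are homotopy equivalent. -/

import Mathlib

open scoped unitInterval ContinuousMap Topology

noncomputable section

/-- `Sph d` is the unit sphere `S^{d-1} ⊆ ℝ^d`. -/
abbrev Sph (d : ℕ) : Type := Metric.sphere (0 : EuclideanSpace ℝ (Fin d)) 1

/-- `Disc d` is the closed unit disc `D^d ⊆ ℝ^d`. -/
abbrev Disc (d : ℕ) : Type := Metric.closedBall (0 : EuclideanSpace ℝ (Fin d)) 1

/-- The special orthogonal group with index type `ι`. -/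
abbrev SOg (ι : Type) [Fintype ι] [DecidableEq ι] : Type :=
  Matrix.specialOrthogonalGroup ι ℝ

/-- `SO n`, the special orthogonal group of `n × n` real matrices. -/
abbrev SO (n : ℕ) : Type := SOg (Fin n)

/-- Reinterpret a plain function `ι → ℝ` as an element of Euclidean space. -/
abbrev toE {ι : Type} (v : ι → ℝ) : EuclideanSpace ℝ ι := WithLp.toLp 2 v

theorem mulVec_norm {ι : Type} [Fintype ι] [DecidableEq ι] (A : SOg ι)
    (v : EuclideanSpace ℝ ι) : ‖toE (A.1.mulVec v)‖ = ‖v‖ := by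
  have key : ∀ w : EuclideanSpace ℝ ι, ‖w‖ ^ 2 = dotProduct w.ofLp w.ofLp := by
    intro w
    rw [EuclideanSpace.norm_sq_eq]
    simp [dotProduct, Real.norm_eq_abs, sq]
  have hA : Matrix.transpose A.1 * A.1 = 1 := by
    have h := (Matrix.mem_specialOrthogonalGroup_iff.mp A.2).1
    rw [Matrix.mem_orthogonalGroup_iff'] at h
    simpa using h
  have h2 : dotProduct (A.1.mulVec v) (A.1.mulVec v) = dotProduct v.ofLp v.ofLp := by
    rw [Matrix.dotProduct_mulVec, ← Matrix.mulVec_transpose, Matrix.mulVec_mulVec, hA,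
      Matrix.one_mulVec]
  have k1 := key (toE (A.1.mulVec v))
  rw [show dotProduct (toE (A.1.mulVec v)).ofLp (toE (A.1.mulVec v)).ofLp
      = dotProduct (A.1.mulVec v) (A.1.mulVec v) from rfl, h2, ← key v] at k1
  have := norm_nonneg (toE (A.1.mulVec v))
  have := norm_nonneg v
  nlinarith

/-- The standard linear action of the special orthogonal group on the unit sphere. -/
def sAct {ι : Type} [Fintype ι] [DecidableEq ι] (A : SOg ι)
    (v : Metric.sphere (0 : EuclideanSpace ℝ ι) 1) :
    Metric.sphere (0 : EuclideanSpace ℝ ι) 1 :=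
  ⟨toE (A.1.mulVec v.1),
    mem_sphere_zero_iff_norm.mpr
      ((mulVec_norm A v.1).trans (mem_sphere_zero_iff_norm.mp v.2))⟩

theorem sAct_continuous {ι : Type} [Fintype ι] [DecidableEq ι] :
    Continuous fun p : SOg ι × Metric.sphere (0 : EuclideanSpace ℝ ι) 1 => sAct p.1 p.2 := by
  apply Continuous.subtype_mk
  exact (PiLp.continuous_toLp 2 _).comp (Continuous.matrix_mulVec
    (continuous_subtype_val.comp continuous_fst)
    ((PiLp.continuous_ofLp 2 _).comp (continuous_subtype_val.comp continuous_snd)))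

/-- The action of a fixed element of `SO(n)` on the sphere, as a continuous map. -/
def sActMap {ι : Type} [Fintype ι] [DecidableEq ι] (A : SOg ι) :
    C(Metric.sphere (0 : EuclideanSpace ℝ ι) 1, Metric.sphere (0 : EuclideanSpace ℝ ι) 1) :=
  ⟨fun v => sAct A v, sAct_continuous.comp (Continuous.prodMk continuous_const continuous_id)⟩

/-- The inclusion of the sphere `S^{d-1}` as the boundary of the disc `D^d`. -/
def sphereToDisc (d : ℕ) : C(Sph d, Disc d) :=
  ⟨fun a => ⟨a.1, Metric.sphere_subset_closedBall a.2⟩,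
    Continuous.subtype_mk continuous_subtype_val _⟩

/-- The pushout (adjunction space) of two maps `f : A → X` and `g : A → B`,
as a quotient of the disjoint union of `X` and `B`. -/
abbrev Pushout {A X B : Type} [TopologicalSpace X] [TopologicalSpace B]
    (f : A → X) (g : A → B) : Type :=
  Quot (fun z w : X ⊕ B => ∃ a : A, z = Sum.inl (f a) ∧ w = Sum.inr (g a))

/-- The canonical map from `X` into the pushout. -/
def Pushout.inl {A X B : Type} [TopologicalSpace X] [TopologicalSpace B]
    (f : A → X) (g : A → B) (x : X) : Pushout f g :=
  Quot.mk _ (Sum.inl x)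

/-- The canonical map from `B` into the pushout. -/
def Pushout.inr {A X B : Type} [TopologicalSpace X] [TopologicalSpace B]
    (f : A → X) (g : A → B) (b : B) : Pushout f g :=
  Quot.mk _ (Sum.inr b)

/-- The twisting self-map `t(a, x) = (τ(x) · a, x)` of `S^{n-1} × S^{k-1}`. -/
def tMap (n k : ℕ) (τ : C(Sph k, SO n)) : C(Sph n × Sph k, Sph n × Sph k) :=
  ⟨fun p => (sAct (τ p.2) p.1, p.2),
    Continuous.prodMk
      (sAct_continuous.comp
        (Continuous.prodMk (τ.continuous.comp continuous_snd) continuous_fst))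
      continuous_snd⟩

/-- The gyration `G^k_τ` of a complex with top-cell attaching map `f : S^{n-1} → X`:
the pushout of `(f × 1) ∘ t : S^{n-1} × S^{k-1} → X × S^{k-1}` along the inclusion
`S^{n-1} × S^{k-1} → S^{n-1} × D^k`. -/
abbrev gyr (n k : ℕ) {X : Type} [TopologicalSpace X] (f : C(Sph n, X))
    (τ : C(Sph k, SO n)) : Type :=
  Pushout (⇑((f.prodMap (ContinuousMap.id (Sph k))).comp (tMap n k τ)))
    (fun p : Sph n × Sph k => (p.1, sphereToDisc k p.2))

/-- Gyration stability: all `k`-gyrations have the same homotopy type. -/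
def GStable (n k : ℕ) {X : Type} [TopologicalSpace X] (f : C(Sph n, X)) : Prop :=
  ∀ τ ω : C(Sph k, SO n), Nonempty ((gyr n k f τ) ≃ₕ (gyr n k f ω))

/-- The mapping cone of `f : S^{n-1} → X`, i.e. `X` with an `n`-cell attached along `f`. -/
abbrev mapCone (n : ℕ) {X : Type} [TopologicalSpace X] (f : C(Sph n, X)) : Type :=
  Pushout (⇑f) (⇑(sphereToDisc n))

/-- A map `i : A → B` is a cofibration if it has the homotopy extension property with
respect to every space. -/
def IsCofibration {A B : Type} [TopologicalSpace A] [TopologicalSpace B]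
    (i : C(A, B)) : Prop :=
  ∀ (Y : Type) [TopologicalSpace Y] (g : C(B, Y)) (H : C(A × I, Y)),
    (∀ a, H (a, 0) = g (i a)) →
    ∃ K : C(B × I, Y), (∀ b, K (b, 0) = g b) ∧ ∀ a t, K (i a, t) = H (a, t)

/-- The relation generating the join `A * B`: collapse `A × B × {1}` along `B` and
`A × B × {0}` along `A`. -/
inductive JoinRel (A B : Type) : A × B × I → A × B × I → Prop
  | top (a : A) (b b' : B) : JoinRel A B (a, b, 1) (a, b', 1)
  | bot (a a' : A) (b : B) : JoinRel A B (a, b, 0) (a', b, 0)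

/-- The join `A * B` of two spaces. -/
abbrev Join (A B : Type) [TopologicalSpace A] [TopologicalSpace B] : Type :=
  Quot (JoinRel A B)

/-- The block inclusion `SO(ι) → SO(ι ⊕ κ)`, `A ↦ A ⊕ I`. -/
def blockIncl (ι κ : Type) [Fintype ι] [DecidableEq ι] [Fintype κ] [DecidableEq κ]
    (A : SOg ι) : SOg (ι ⊕ κ) :=
  ⟨Matrix.fromBlocks A.1 0 0 1, by
    obtain ⟨hO, hdet⟩ := Matrix.mem_specialOrthogonalGroup_iff.mp A.2
    rw [Matrix.mem_orthogonalGroup_iff] at hO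
    rw [Matrix.mem_specialOrthogonalGroup_iff]
    constructor
    · rw [Matrix.mem_orthogonalGroup_iff]
      have : star (Matrix.fromBlocks A.1 0 0 (1 : Matrix κ κ ℝ))
          = Matrix.fromBlocks (star A.1) 0 0 1 := by
        simp [Matrix.star_eq_conjTranspose, Matrix.fromBlocks_conjTranspose, Matrix.fromBlocks_transpose]
      rw [Matrix.fromBlocks_transpose, Matrix.fromBlocks_multiply]
      simp [hO, Matrix.fromBlocks_one]
    · rw [Matrix.det_fromBlocks_zero₂₁]
      simp [hdet]⟩

theorem blockIncl_one (ι κ : Type) [Fintype ι] [DecidableEq ι] [Fintype κ] [DecidableEq κ] :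
    blockIncl ι κ 1 = 1 := by
  apply Subtype.ext
  simp [blockIncl, Matrix.fromBlocks_one]

theorem blockIncl_continuous (ι κ : Type) [Fintype ι] [DecidableEq ι] [Fintype κ]
    [DecidableEq κ] : Continuous (blockIncl ι κ) := by
  apply Continuous.subtype_mk
  exact Continuous.matrix_fromBlocks continuous_subtype_val continuous_const continuous_const
    continuous_const

/-- The block inclusion as a continuous map. -/
def blockInclMap (ι κ : Type) [Fintype ι] [DecidableEq ι] [Fintype κ] [DecidableEq κ] :
    C(SOg ι, SOg (ι ⊕ κ)) :=
  ⟨blockIncl ι κ, blockIncl_continuous ι κ⟩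

/-- The map induced on homotopy groups by a based continuous map. -/
def piMap {X Y : Type} [TopologicalSpace X] [TopologicalSpace Y] (N : Type)
    (f : C(X, Y)) {x : X} {y : Y} (hxy : f x = y) :
    HomotopyGroup N X x → HomotopyGroup N Y y :=
  Quotient.map
    (fun p => ⟨f.comp p.1, fun c hc => by
      simp only [ContinuousMap.comp_apply]
      rw [p.2 c hc, hxy]⟩)
    (fun p q h => h.elim fun H => ⟨H.compContinuousMap f⟩)

/-- The boundary `∂(D^n × D^m) = (S^{n-1} × D^m) ∪ (D^n × S^{m-1})` of a product of discs. -/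
abbrev Bd (n m : ℕ) : Type :=
  {p : Disc n × Disc m // ‖(p.1.1 : EuclideanSpace ℝ (Fin n))‖ = 1 ∨
    ‖(p.2.1 : EuclideanSpace ℝ (Fin m))‖ = 1}

/-- The wedge `X ∨ Y` of two pointed spaces. -/
abbrev Wedge (X Y : Type) [TopologicalSpace X] [TopologicalSpace Y] (x0 : X) (y0 : Y) : Type :=
  Quot (fun z w : X ⊕ Y => z = Sum.inl x0 ∧ w = Sum.inr y0)

/-! A homotopy `F : g ≃ h` glues `B × I` to `X`, giving the double mapping cylinder
`Z = X ∪_F (B × I)` whose ends are `B ∪_g X` and `B ∪_h X`; reversing time swaps the ends, so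
it suffices that the inclusion of the `0`-end is a homotopy equivalence. As `i` is a
cofibration, the map `(A × I) ∪_{A × {0}} B → B × I` has a retraction `K`. Following `K` and
then `F` collapses `Z` onto `B ∪_g X`, and sliding `B × I` along the retraction
`B × I → B × {0} ∪ i(A) × I` induced by `K`, which fixes `i(A) × I`, deforms the identity of
`Z` into inclusion ∘ collapse. -/

namespace Pushout

variable {A X B Y : Type} [TopologicalSpace X] [TopologicalSpace B] [TopologicalSpace Y]
  {f : A → X} {g : A → B}

theorem inl_eq_inr (a : A) : inl f g (f a) = inr f g (g a) :=
  Quot.sound ⟨a, rfl, rfl⟩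

variable (f g) in
def inlMap : C(X, Pushout f g) :=
  ⟨inl f g, continuous_quot_mk.comp continuous_inl⟩

variable (f g) in
def inrMap : C(B, Pushout f g) :=
  ⟨inr f g, continuous_quot_mk.comp continuous_inr⟩

@[simp]
theorem inlMap_apply (x : X) : inlMap f g x = inl f g x := rfl

@[simp]
theorem inrMap_apply (b : B) : inrMap f g b = inr f g b := rfl

def desc (u : C(X, Y)) (v : C(B, Y)) (h : ∀ a, u (f a) = v (g a)) : C(Pushout f g, Y) :=
  ⟨Quot.lift (Sum.elim u v) (by rintro _ _ ⟨a, rfl, rfl⟩; exact h a),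
    continuous_quot_lift _ (u.continuous.sumElim v.continuous)⟩

@[simp]
theorem desc_inl (u : C(X, Y)) (v : C(B, Y)) (h : ∀ a, u (f a) = v (g a)) (x : X) :
    desc u v h (inl f g x) = u x := rfl

@[simp]
theorem desc_inr (u : C(X, Y)) (v : C(B, Y)) (h : ∀ a, u (f a) = v (g a)) (b : B) :
    desc u v h (inr f g b) = v b := rfl

@[elab_as_elim]
theorem induction_on {P : Pushout f g → Prop} (p : Pushout f g) (inl : ∀ x, P (inl f g x))
    (inr : ∀ b, P (inr f g b)) : P p := by
  induction p using Quot.ind with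
  | mk z => cases z with
    | inl x => exact inl x
    | inr b => exact inr b

theorem hom_ext {φ ψ : C(Pushout f g, Y)} (hl : ∀ x, φ (inl f g x) = ψ (inl f g x))
    (hr : ∀ b, φ (inr f g b) = ψ (inr f g b)) : φ = ψ :=
  ContinuousMap.ext fun p => p.induction_on hl hr

def homotopy {φ₀ φ₁ : C(Pushout f g, Y)}
    (Hl : (φ₀.comp (inlMap f g)).Homotopy (φ₁.comp (inlMap f g)))
    (Hr : (φ₀.comp (inrMap f g)).Homotopy (φ₁.comp (inrMap f g)))
    (h : ∀ s a, Hl (s, f a) = Hr (s, g a)) : φ₀.Homotopy φ₁ :=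
  -- glue the curried homotopies, which are maps into `C(I, Y)`, since `I` is locally compact
  let G : C(Pushout f g, C(I, Y)) :=
    desc (ContinuousMap.curry (Hl.toContinuousMap.comp .prodSwap))
      (ContinuousMap.curry (Hr.toContinuousMap.comp .prodSwap)) fun a => by ext s; exact h s a
  { toFun := fun p => G p.2 p.1
    continuous_toFun := (ContinuousMap.uncurry G).continuous.comp continuous_swap
    map_zero_left := fun p => p.induction_on Hl.apply_zero Hr.apply_zero
    map_one_left := fun p => p.induction_on Hl.apply_one Hr.apply_one }

def congr {A' X' B' : Type} [TopologicalSpace X'] [TopologicalSpace B']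
    {f' : A' → X'} {g' : A' → B'} (eA : A ≃ A') (eX : X ≃ₜ X') (eB : B ≃ₜ B')
    (hf : ∀ a, f' (eA a) = eX (f a)) (hg : ∀ a, g' (eA a) = eB (g a)) :
    Pushout f g ≃ₜ Pushout f' g' where
  toFun := desc ((inlMap f' g').comp eX) ((inrMap f' g').comp eB) fun a => by
    simpa [hf, hg] using inl_eq_inr (f := f') (g := g') (eA a)
  invFun := desc ((inlMap f g).comp eX.symm) ((inrMap f g).comp eB.symm) fun a' => by
    obtain ⟨a, rfl⟩ := eA.surjective a'
    simpa [hf, hg] using inl_eq_inr (f := f) (g := g) a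
  left_inv p := p.induction_on (fun x => by simp) (fun b => by simp)
  right_inv p := p.induction_on (fun x => by simp) (fun b => by simp)
  continuous_toFun := ContinuousMap.continuous _
  continuous_invFun := ContinuousMap.continuous _

end Pushout

def slideHomotopy {B : Type} [TopologicalSpace B] (r : C(B × I, B × I))
    (hr : ∀ b, r (b, 0) = (b, 0)) : (ContinuousMap.id (B × I)).Homotopy r where
  toFun p := ((r (p.2.1, p.1 * p.2.2)).1, Set.Icc.convexComb p.2.2 (r p.2).2 p.1)
  continuous_toFun := by
    have : Continuous fun p : I × (B × I) => (p.2.2, (r p.2).2, p.1) := by fun_prop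
    exact .prodMk (by fun_prop) (Set.Icc.continuous_convexComb_prod.comp this)
  map_zero_left p := by simp [hr]
  map_one_left p := by simp

theorem slideHomotopy_apply_of_forall_eq {B : Type} [TopologicalSpace B] (r : C(B × I, B × I))
    (hr : ∀ b, r (b, 0) = (b, 0)) {b : B} (hb : ∀ t, r (b, t) = (b, t)) (s t : I) :
    slideHomotopy r hr (s, (b, t)) = (b, t) := by
  change ((r (b, s * t)).1, Set.Icc.convexComb t (r (b, t)).2 s) = (b, t)
  simp [hb]

section Cylinder

variable {A B X : Type} [TopologicalSpace A] [TopologicalSpace B] [TopologicalSpace X]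

abbrev MapCyl (i : C(A, B)) : Type :=
  Pushout (fun a : A => (a, (0 : I))) ⇑i

def MapCyl.proj (i : C(A, B)) : C(MapCyl i, B × I) :=
  Pushout.desc (i.prodMap (.id I)) ⟨fun b => (b, 0), by fun_prop⟩ fun _ => rfl

theorem IsCofibration.exists_retraction_mapCylProj {i : C(A, B)} (hi : IsCofibration i) :
    ∃ K : C(B × I, MapCyl i), K.comp (MapCyl.proj i) = .id _ := by
  obtain ⟨K, hK₀, hK⟩ := hi (MapCyl i) (Pushout.inrMap _ _) (Pushout.inlMap _ _)
    fun a => Pushout.inl_eq_inr a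
  exact ⟨K, Pushout.hom_ext (fun p => hK p.1 p.2) hK₀⟩

/-- The double mapping cylinder `X ∪_F (B × I)` of a homotopy `F : g ≃ h`, which contains
`B ∪_g X` at its `0`-end and `B ∪_h X` at its `1`-end. -/
abbrev HomotopyPushout (i : C(A, B)) {g h : C(A, X)} (F : g.Homotopy h) : Type :=
  Pushout (⇑F ∘ Prod.swap) (Prod.map ⇑i id)

namespace HomotopyPushout

variable (i : C(A, B)) {g h : C(A, X)} (F : g.Homotopy h)

def flip : HomotopyPushout i F ≃ₜ HomotopyPushout i F.symm :=
  Pushout.congr ((Equiv.refl A).prodCongr unitInterval.symmHomeomorph.toEquiv)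
    (Homeomorph.refl X) ((Homeomorph.refl B).prodCongr unitInterval.symmHomeomorph)
    (fun _ => by simp [Prod.swap]) fun _ => rfl

def inclZero : C(Pushout g i, HomotopyPushout i F) :=
  Pushout.desc (Pushout.inlMap _ _) ((Pushout.inrMap _ _).comp ⟨fun b => (b, 0), by fun_prop⟩)
    fun a => by simpa using Pushout.inl_eq_inr (f := ⇑F ∘ Prod.swap) (g := Prod.map i id) (a, 0)

def mapCylToPushout : C(MapCyl i, Pushout g i) :=
  Pushout.desc ((Pushout.inlMap _ _).comp (F.toContinuousMap.comp .prodSwap))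
    (Pushout.inrMap _ _) fun a => by simpa using Pushout.inl_eq_inr a

theorem inclZero_comp_mapCylToPushout :
    (inclZero i F).comp (mapCylToPushout i F) = (Pushout.inrMap _ _).comp (MapCyl.proj i) :=
  Pushout.hom_ext (fun p => Pushout.inl_eq_inr p) fun _ => rfl

variable {i} (K : C(B × I, MapCyl i)) (hK : K.comp (MapCyl.proj i) = .id _)

include hK in
theorem retraction_apply_zero (b : B) : K (b, 0) = Pushout.inr _ _ b :=
  DFunLike.congr_fun hK (Pushout.inr _ _ b)

include hK in
theorem retraction_apply_incl (a : A) (t : I) : K (i a, t) = Pushout.inl _ _ (a, t) :=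
  DFunLike.congr_fun hK (Pushout.inl _ _ (a, t))

def collapse : C(HomotopyPushout i F, Pushout g i) :=
  Pushout.desc (Pushout.inlMap _ _) ((mapCylToPushout i F).comp K) fun p => by
    change _ = mapCylToPushout i F (K (i p.1, p.2))
    rw [retraction_apply_incl K hK]
    rfl

theorem collapse_comp_inclZero : (collapse F K hK).comp (inclZero i F) = .id _ :=
  Pushout.hom_ext (fun _ => rfl) fun b => by
    change mapCylToPushout i F (K (b, 0)) = _
    rw [retraction_apply_zero K hK]
    rfl

/-- `r` retracts `B × I` onto `B × {0} ∪ i(A) × I`, and `inclZero ∘ collapse` is `inr ∘ r` on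
`B × I`, so sliding along `r` is the homotopy. -/
def homotopyInclZeroCollapse : (ContinuousMap.id _).Homotopy ((inclZero i F).comp (collapse F K hK)) :=
  let r := (MapCyl.proj i).comp K
  have hr₀ (b : B) : r (b, 0) = (b, 0) := by
    change MapCyl.proj i (K (b, 0)) = _
    rw [retraction_apply_zero K hK]
    rfl
  have hr (a : A) (t : I) : r (i a, t) = (i a, t) := by
    change MapCyl.proj i (K (i a, t)) = _
    rw [retraction_apply_incl K hK]
    rfl
  Pushout.homotopy ((ContinuousMap.Homotopy.refl _).cast rfl (by ext; rfl))
    (((ContinuousMap.Homotopy.refl (Pushout.inrMap _ _)).comp (slideHomotopy r hr₀)).cast rfl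
      (ContinuousMap.ext fun bt =>
        (DFunLike.congr_fun (inclZero_comp_mapCylToPushout i F) (K bt)).symm))
    fun s p => by
      change Pushout.inl _ _ _ = Pushout.inr _ _ (slideHomotopy r hr₀ (s, (i p.1, p.2)))
      rw [slideHomotopy_apply_of_forall_eq r hr₀ (hr p.1)]
      exact Pushout.inl_eq_inr p

theorem _root_.IsCofibration.homotopyEquiv_homotopyPushout (hi : IsCofibration i) :
    Nonempty (Pushout g i ≃ₕ HomotopyPushout i F) := by
  obtain ⟨K, hK⟩ := hi.exists_retraction_mapCylProj
  exact ⟨⟨inclZero i F, collapse F K hK, by rw [collapse_comp_inclZero],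
    ⟨(homotopyInclZeroCollapse F K hK).symm⟩⟩⟩

end HomotopyPushout

end Cylinder

/-- If `g, h : A → X` are homotopic and `i : A → B` is a cofibration, then the
pushouts `B ∪_g X` and `B ∪_h X` are homotopy equivalent. -/
theorem pushout_homotopic_attaching (A B X : Type) [TopologicalSpace A] [TopologicalSpace B]
    [TopologicalSpace X] (i : C(A, B)) (g h : C(A, X))
    (hgh : g.Homotopic h) (hi : IsCofibration i) :
    Nonempty (Pushout (⇑g) (⇑i) ≃ₕ Pushout (⇑h) (⇑i)) := by
  obtain ⟨F⟩ := hgh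
  obtain ⟨e₀⟩ := hi.homotopyEquiv_homotopyPushout F
  obtain ⟨e₁⟩ := hi.homotopyEquiv_homotopyPushout F.symm
  exact ⟨e₀.trans ((HomotopyPushout.flip i F).toHomotopyEquiv.trans e₁.symm)⟩
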